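/- arXiv:1009.2592 — 3 statements merged into one kernel-verified Lean document; each statement's English description precedes it below -/
import Mathlib

section
/- Let A be a separable C*-algebra, B a separable C*-algebra, and H_B the standard Hilbert B-module. Let ψ: A → L(H_B) be an absorbing representation and φ: A → L(H_B) any representation. Then there exists a sequence of isometries v_n ∈ L(H_B^(∞), H_B) such that for each a ∈ A: (i) v_n φ^(∞)(a) − ψ(a) v_n ∈ K(H_B^(∞), H_B) for all n, (ii) ‖v_n φ^(∞)(a) − ψ(a) v_n‖ → 0 as n → ∞, and (iii) v_j* v_i = 0 for i ≠ j. -/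
/-!
STATEMENT 0: Let `A` be a separable C*-algebra, `B` a separable C*-algebra, `H_B` the standard
Hilbert `B`-module, `ψ : A → L(H_B)` an absorbing representation and `φ : A → L(H_B)` any
representation.  Then there is a sequence of isometries `vₙ ∈ L(H_B^∞, H_B)` with
`vₙ φ^∞(a) − ψ(a) vₙ ∈ K(H_B^∞, H_B)`, `‖vₙ φ^∞(a) − ψ(a) vₙ‖ → 0`, and `vⱼ* vᵢ = 0` (`i ≠ j`).

Modeling: `L(H_B) = M(B⊗K)` and `K(H_B) = B⊗K`; we write `A₀` for the C*-algebra `B⊗K`, so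
`L(H_B)` is the multiplier algebra `𝓜(ℂ, A₀)` and `K(H_B)` is the canonical image of `A₀` in it
(`A₀` is separable iff `B` is).  The standard isomorphism `H_B^∞ ≅ H_B` is encoded by a sequence
`S` of isometries of `L(H_B)` with mutually orthogonal ranges summing strictly to `1`
(these exist in `L(H_B)`); under it, operators in `L(H_B^∞, H_B)` and `K(H_B^∞, H_B)` become
elements of `𝓜(ℂ, A₀)` resp. of the ideal, and `φ^∞ = φ ⊕ φ ⊕ ⋯` becomes the representation
`Φ = Σᵢ Sᵢ φ(·) Sᵢ*`, i.e. the unique representation with `Φ(a) Sᵢ = Sᵢ φ(a)` for all `i, a`.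
Representations are (automatically bounded) star-homomorphisms; a representation `ψ` is
absorbing when `ψ ⊕ σ` is approximately unitarily equivalent to `ψ` for every representation
`σ` (direct sums being implemented inside `L(H_B)` by any pair of cutting isometries).
-/

open MultiplierAlgebra Filter Topology

/-- The canonical ideal `A₀ = B⊗K = K(H_B)` inside `𝓜(ℂ, A₀) = L(H_B) = M(B⊗K)`. -/
def canonicalIdeal (A₀ : Type*) [NonUnitalCStarAlgebra A₀] : Set 𝓜(ℂ, A₀) :=
  Set.range (DoubleCentralizer.coe ℂ : A₀ → 𝓜(ℂ, A₀))

/-- The ranges of the isometries `S i` are mutually orthogonal and sum to `1` in the strict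
topology of the multiplier algebra. -/
def IsStrictCuttingSequence {A₀ : Type*} [NonUnitalCStarAlgebra A₀]
    (S : ℕ → 𝓜(ℂ, A₀)) : Prop :=
  (∀ i, star (S i) * S i = 1) ∧
  (∀ i j, i ≠ j → star (S i) * S j = 0) ∧
  (∀ a : A₀,
    Tendsto (fun N => ‖((1 : 𝓜(ℂ, A₀)) - ∑ i ∈ Finset.range N, S i * star (S i)) *
      DoubleCentralizer.coe ℂ a‖) atTop (nhds 0) ∧
    Tendsto (fun N => ‖DoubleCentralizer.coe ℂ a *
      ((1 : 𝓜(ℂ, A₀)) - ∑ i ∈ Finset.range N, S i * star (S i))‖) atTop (nhds 0))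

/-- Approximate unitary equivalence (with compact differences) of two maps `A → L(H_B)`. -/
def AUEquiv {A A₀ : Type*} [NonUnitalCStarAlgebra A] [NonUnitalCStarAlgebra A₀]
    (π σ : A → 𝓜(ℂ, A₀)) : Prop :=
  ∃ u : ℕ → 𝓜(ℂ, A₀), (∀ n, u n ∈ unitary 𝓜(ℂ, A₀)) ∧
    ∀ a : A,
      (∀ n, σ a - u n * π a * star (u n) ∈ canonicalIdeal A₀) ∧
      Tendsto (fun n => ‖σ a - u n * π a * star (u n)‖) atTop (nhds 0)

/-- `ψ` is an absorbing representation: for every representation `σ`, the direct sum `ψ ⊕ σ`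
(implemented by any pair of cutting isometries `s₁, s₂` of `L(H_B)`) is approximately unitarily
equivalent to `ψ`. -/
def Absorbing {A A₀ : Type*} [NonUnitalCStarAlgebra A] [NonUnitalCStarAlgebra A₀]
    (ψ : A →⋆ₙₐ[ℂ] 𝓜(ℂ, A₀)) : Prop :=
  ∀ σ : A →⋆ₙₐ[ℂ] 𝓜(ℂ, A₀), ∀ s₁ s₂ : 𝓜(ℂ, A₀),
    star s₁ * s₁ = 1 → star s₂ * s₂ = 1 → star s₁ * s₂ = 0 →
    s₁ * star s₁ + s₂ * star s₂ = 1 →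
    AUEquiv (fun a => s₁ * ψ a * star s₁ + s₂ * σ a * star s₂) ψ

/-!
Absorption, applied to `σ = Φ`, gives a unitary `u` with `ψ ≡ u (s₁ ψ s₁* + s₂ Φ s₂*) u*` modulo
`K(H_B)`, so `w = u s₂` is an isometry intertwining `Φ` and `ψ` up to a compact `k`. Composing `w`
with isometries `Tₙ` that commute with `Φ`, have mutually orthogonal ranges, and have range
orthogonal to `S 0, …, S (n - 1)`, the defects `k Tₙ = k (1 - Σ_{i<n} Sᵢ Sᵢ*) Tₙ` are compact and
tend to `0` by strict convergence. The isometries needed (`s₁, s₂, Tₙ`) are the strict limits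
`Σₘ S (q m) S m*` for suitable injections `q` (`m ↦ 2m`, `m ↦ 2m + 1`, `Nat.pair n`); such a limit
is pinned down by `W * S m = S (q m)`, because a multiplier is determined by its products with the
`S m`, and all the relations between them are checked on the `S m`.
-/

open Finset

theorem eq_of_forall_mul_left {E : Type*} [NonUnitalNormedRing E] [StarRing E] [CStarRing E]
    {z w : E} (h : ∀ u, u * z = u * w) : z = w :=
  sub_eq_zero.1 <| (CStarRing.star_mul_self_eq_zero_iff _).1 <| by rw [mul_sub, h, sub_self]

theorem eq_of_forall_mul_right {E : Type*} [NonUnitalNormedRing E] [StarRing E] [CStarRing E]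
    {z w : E} (h : ∀ u, z * u = w * u) : z = w :=
  sub_eq_zero.1 <| (CStarRing.mul_star_self_eq_zero_iff _).1 <| by rw [sub_mul, h, sub_self]

theorem norm_le_one_of_star_mul_self_eq_one {E : Type*} [NormedRing E] [StarRing E] [CStarRing E]
    {x : E} (hx : star x * x = 1) : ‖x‖ ≤ 1 := by
  have h : ‖x‖ * ‖x‖ ≤ 1 := by
    rw [← CStarRing.norm_star_mul_self, hx]
    exact (IsStarProjection.one E).norm_le
  nlinarith [norm_nonneg x]

section OrthogonalIsometries

variable {R ι κ : Type*} [Ring R] [StarRing R] {S : ι → R}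

theorem sum_mul_star_mul_eq_zero (hS : ∀ i j, i ≠ j → star (S i) * S j = 0) (s : Finset κ)
    (a : κ → R) (p : κ → ι) {k : ι} (hk : ∀ i ∈ s, p i ≠ k) :
    (∑ i ∈ s, a i * star (S (p i))) * S k = 0 := by
  rw [sum_mul]
  exact sum_eq_zero fun i hi => by rw [mul_assoc, hS _ _ (hk i hi), mul_zero]

theorem sum_mul_star_mul_of_mem (hS₁ : ∀ i, star (S i) * S i = 1)
    (hS₂ : ∀ i j, i ≠ j → star (S i) * S j = 0) {s : Finset κ} (a : κ → R) {p : κ → ι}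
    (hp : Function.Injective p) {m : κ} (hm : m ∈ s) :
    (∑ i ∈ s, a i * star (S (p i))) * S (p m) = a m := by
  rw [sum_mul, sum_eq_single_of_mem m hm, mul_assoc, hS₁, mul_one]
  intro i _ him
  rw [mul_assoc, hS₂ _ _ (hp.ne him), mul_zero]

theorem sum_mul_star_mul_sum (hS₁ : ∀ i, star (S i) * S i = 1)
    (hS₂ : ∀ i j, i ≠ j → star (S i) * S j = 0) (s : Finset κ) (a b : κ → R) {p : κ → ι}
    (hp : Function.Injective p) :
    (∑ i ∈ s, a i * star (S (p i))) * ∑ j ∈ s, S (p j) * b j = ∑ i ∈ s, a i * b i := by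
  rw [mul_sum]
  exact sum_congr rfl fun j hj => by rw [← mul_assoc, sum_mul_star_mul_of_mem hS₁ hS₂ a hp hj]

end OrthogonalIsometries

theorem norm_sum_mul_star_le_one {R ι κ : Type*} [NormedRing R] [StarRing R] [CStarRing R]
    {S : ι → R} (hS₁ : ∀ i, star (S i) * S i = 1) (hS₂ : ∀ i j, i ≠ j → star (S i) * S j = 0)
    (s : Finset κ) {p r : κ → ι} (hp : Function.Injective p) (hr : Function.Injective r) :
    ‖∑ i ∈ s, S (r i) * star (S (p i))‖ ≤ 1 := by
  have hproj : IsStarProjection (∑ i ∈ s, S (p i) * star (S (p i))) :=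
    ⟨sum_mul_star_mul_sum hS₁ hS₂ s _ _ hp,
      isSelfAdjoint_sum s fun i _ => IsSelfAdjoint.mul_star_self (S (p i))⟩
  have hsq : star (∑ i ∈ s, S (r i) * star (S (p i))) * ∑ i ∈ s, S (r i) * star (S (p i)) =
      ∑ i ∈ s, S (p i) * star (S (p i)) := by
    simp only [star_sum, star_mul, star_star]
    exact sum_mul_star_mul_sum hS₁ hS₂ s _ _ hr
  have h := hproj.norm_le
  rw [← hsq, CStarRing.norm_star_mul_self] at h
  nlinarith [norm_nonneg (∑ i ∈ s, S (r i) * star (S (p i)))]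

namespace DoubleCentralizer

variable {A₀ : Type*} [NonUnitalCStarAlgebra A₀]

theorem norm_coe (a : A₀) : ‖(a : 𝓜(ℂ, A₀))‖ = ‖a‖ := by
  rw [← norm_fst]
  exact ContinuousLinearMap.opNorm_mul_apply ℂ A₀ a

theorem isometry_coe : Isometry (DoubleCentralizer.coe ℂ : A₀ → 𝓜(ℂ, A₀)) :=
  AddMonoidHomClass.isometry_of_norm (coeHom : A₀ →⋆ₙₐ[ℂ] 𝓜(ℂ, A₀)) norm_coe

theorem coe_star (a : A₀) : ((star a : A₀) : 𝓜(ℂ, A₀)) = star (a : 𝓜(ℂ, A₀)) :=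
  map_star (coeHom : A₀ →⋆ₙₐ[ℂ] 𝓜(ℂ, A₀)) a

theorem coe_neg (a : A₀) : ((-a : A₀) : 𝓜(ℂ, A₀)) = -(a : 𝓜(ℂ, A₀)) :=
  map_neg (coeHom : A₀ →⋆ₙₐ[ℂ] 𝓜(ℂ, A₀)) a

theorem fst_apply_mul (m : 𝓜(ℂ, A₀)) (x y : A₀) : m.fst (x * y) = m.fst x * y :=
  eq_of_forall_mul_left fun u => by rw [← m.central, ← mul_assoc, m.central, mul_assoc]

theorem snd_apply_mul (m : 𝓜(ℂ, A₀)) (x y : A₀) : m.snd (x * y) = x * m.snd y :=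
  eq_of_forall_mul_right fun u => by rw [m.central, mul_assoc, ← m.central, mul_assoc]

theorem mul_coe (m : 𝓜(ℂ, A₀)) (a : A₀) : m * (a : 𝓜(ℂ, A₀)) = ↑(m.fst a) := by
  ext x
  · exact fst_apply_mul m a x
  · exact m.central x a

theorem coe_mul (a : A₀) (m : 𝓜(ℂ, A₀)) : (a : 𝓜(ℂ, A₀)) * m = ↑(m.snd a) := by
  ext x
  · exact (m.central a x).symm
  · exact snd_apply_mul m x a

theorem ext_coe {m m' : 𝓜(ℂ, A₀)} (h : ∀ a : A₀, m * (a : 𝓜(ℂ, A₀)) = m' * a) : m = m' := by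
  have hfst : ∀ a, m.fst a = m'.fst a := fun a =>
    isometry_coe.injective (by simpa only [mul_coe] using h a)
  ext x
  · exact hfst x
  · exact eq_of_forall_mul_right fun u => by rw [m.central, m'.central, hfst]

theorem exists_tendsto_mul_coe {f : ℕ → 𝓜(ℂ, A₀)}
    (hl : ∀ a : A₀, CauchySeq fun N => f N * (a : 𝓜(ℂ, A₀)))
    (hr : ∀ a : A₀, CauchySeq fun N => (a : 𝓜(ℂ, A₀)) * f N) :
    ∃ W : 𝓜(ℂ, A₀), ∀ a : A₀,
      Tendsto (fun N => f N * (a : 𝓜(ℂ, A₀))) atTop (𝓝 (W * a)) := by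
  have cauchy_of_coe {g : ℕ → A₀} (h : CauchySeq fun N => (g N : 𝓜(ℂ, A₀))) : CauchySeq g :=
    isometry_coe.isUniformInducing.cauchy_map_iff.1 (by rwa [Filter.map_map])
  choose L hL using fun a =>
    cauchySeq_tendsto_of_complete (cauchy_of_coe (by simpa only [mul_coe] using hl a))
  choose R hR using fun a =>
    cauchySeq_tendsto_of_complete (cauchy_of_coe (by simpa only [coe_mul] using hr a))
  let W : 𝓜(ℂ, A₀) :=
    { fst := continuousLinearMapOfTendsto (fun N => (f N).fst) (tendsto_pi_nhds.2 hL)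
      snd := continuousLinearMapOfTendsto (fun N => (f N).snd) (tendsto_pi_nhds.2 hR)
      central := fun x y => show R x * y = x * L y from tendsto_nhds_unique
        (by simpa only [(f _).central] using (hR x).mul_const y) ((hL y).const_mul x) }
  refine ⟨W, fun a => ?_⟩
  rw [mul_coe]
  exact ((isometry_coe.continuous.tendsto _).comp (hL a)).congr fun N => (mul_coe _ _).symm

end DoubleCentralizer

namespace IsStrictCuttingSequence

open DoubleCentralizer

variable {A₀ : Type*} [NonUnitalCStarAlgebra A₀] {S : ℕ → 𝓜(ℂ, A₀)}

theorem ext (hS : IsStrictCuttingSequence S) {X Y : 𝓜(ℂ, A₀)} (h : ∀ m, X * S m = Y * S m) :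
    X = Y := by
  refine ext_coe fun a => sub_eq_zero.1 (norm_le_zero_iff.1 ?_)
  have hP : ∀ N, (X - Y) * ∑ i ∈ range N, S i * star (S i) = 0 := fun N => by
    rw [mul_sum]
    exact sum_eq_zero fun i _ => by rw [← mul_assoc, sub_mul, h, sub_self, zero_mul]
  refine ge_of_tendsto' (by simpa only [mul_zero] using ((hS.2.2 a).1).const_mul ‖X - Y‖)
    fun N => ?_
  calc ‖X * a - Y * a‖
      = ‖(X - Y) * ((1 - ∑ i ∈ range N, S i * star (S i)) * a)‖ := by
        rw [← mul_assoc, mul_sub, hP, mul_one, sub_zero, sub_mul]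
    _ ≤ _ := norm_mul_le _ _

theorem ext_star (hS : IsStrictCuttingSequence S) {X Y : 𝓜(ℂ, A₀)}
    (h : ∀ m, star (S m) * X = star (S m) * Y) : X = Y :=
  star_injective <| hS.ext fun m => by simpa only [star_mul, star_star] using congrArg star (h m)

theorem cauchySeq_sum_mul_coe (hS : IsStrictCuttingSequence S) {p r : ℕ → ℕ}
    (hp : Function.Injective p) (hr : Function.Injective r) (hpm : ∀ m, m ≤ p m) (a : A₀) :
    CauchySeq fun N => (∑ m ∈ range N, S (r m) * star (S (p m))) * (a : 𝓜(ℂ, A₀)) := by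
  refine cauchySeq_of_le_tendsto_0'
    (fun K => ‖(1 - ∑ i ∈ range K, S i * star (S i)) * (a : 𝓜(ℂ, A₀))‖)
    (fun K n hKn => ?_) (hS.2.2 a).1
  have htail :
      (∑ m ∈ Ico K n, S (r m) * star (S (p m))) * ∑ i ∈ range K, S i * star (S i) = 0 := by
    rw [mul_sum]
    refine sum_eq_zero fun i hi => ?_
    rw [← mul_assoc, sum_mul_star_mul_eq_zero hS.2.1 _ _ _ fun m hm => ?_, zero_mul]
    have := (mem_Ico.1 hm).1
    have := mem_range.1 hi
    have := hpm m
    omega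
  calc dist _ _
      = ‖(∑ m ∈ Ico K n, S (r m) * star (S (p m))) *
          ((1 - ∑ i ∈ range K, S i * star (S i)) * a)‖ := by
        rw [dist_comm, dist_eq_norm, ← sub_mul, ← sum_Ico_eq_sub _ hKn, ← mul_assoc, mul_sub,
          htail, mul_one, sub_zero]
    _ ≤ _ := (norm_mul_le _ _).trans <|
        mul_le_of_le_one_left (norm_nonneg _) (norm_sum_mul_star_le_one hS.1 hS.2.1 _ hp hr)

theorem exists_mul_eq (hS : IsStrictCuttingSequence S) {q : ℕ → ℕ} (hq : Function.Injective q)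
    (hqm : ∀ m, m ≤ q m) : ∃ W : 𝓜(ℂ, A₀), ∀ m, W * S m = S (q m) := by
  obtain ⟨W, hW⟩ := exists_tendsto_mul_coe (f := fun N => ∑ m ∈ range N, S (q m) * star (S m))
    (hS.cauchySeq_sum_mul_coe (p := id) Function.injective_id hq le_refl) fun a => by
      simpa only [Function.comp_def, star_mul, star_sum, star_star, coe_star, id_eq] using
        star_isometry.uniformContinuous.comp_cauchySeq
          (hS.cauchySeq_sum_mul_coe (r := id) hq Function.injective_id hqm (star a))
  refine ⟨W, fun m => ext_coe fun a => ?_⟩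
  have hlim := hW ((S m).fst a)
  rw [← mul_coe] at hlim
  rw [mul_assoc]
  refine tendsto_nhds_unique hlim (tendsto_const_nhds.congr' ?_)
  filter_upwards [eventually_gt_atTop m] with N hN
  rw [← mul_assoc]
  exact congrArg (· * (a : 𝓜(ℂ, A₀))) (sum_mul_star_mul_of_mem (p := id) hS.1 hS.2.1
    (fun i => S (q i)) Function.injective_id (mem_range.2 hN)).symm

section Shift

variable (hS : IsStrictCuttingSequence S) {q : ℕ → ℕ} {W : 𝓜(ℂ, A₀)}
include hS

theorem star_mul_of_mul_eq (hq : Function.Injective q) (hW : ∀ m, W * S m = S (q m)) (m : ℕ) :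
    star W * S (q m) = S m :=
  hS.ext_star fun j => by
    rw [← mul_assoc, ← star_mul, hW]
    rcases eq_or_ne j m with rfl | hjm
    · rw [hS.1, hS.1]
    · rw [hS.2.1 _ _ (hq.ne hjm), hS.2.1 _ _ hjm]

theorem star_mul_eq_zero_of_mul_eq (hW : ∀ m, W * S m = S (q m)) {k : ℕ} (hk : ∀ m, q m ≠ k) :
    star W * S k = 0 :=
  hS.ext_star fun j => by rw [← mul_assoc, ← star_mul, hW, hS.2.1 _ _ (hk j), mul_zero]

theorem star_mul_self_eq_one_of_mul_eq (hq : Function.Injective q)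
    (hW : ∀ m, W * S m = S (q m)) : star W * W = 1 :=
  hS.ext fun m => by rw [mul_assoc, hW, hS.star_mul_of_mul_eq hq hW, one_mul]

theorem star_mul_eq_zero_of_disjoint_range {q' : ℕ → ℕ} {W' : 𝓜(ℂ, A₀)}
    (hW : ∀ m, W * S m = S (q m)) (hW' : ∀ m, W' * S m = S (q' m))
    (h : Disjoint (Set.range q) (Set.range q')) : star W' * W = 0 :=
  hS.ext fun m => by
    rw [mul_assoc, hW, hS.star_mul_eq_zero_of_mul_eq hW' fun m' =>
      (Set.disjoint_range_iff.1 h m m').symm, zero_mul]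

theorem commute_of_mul_eq (hW : ∀ m, W * S m = S (q m)) {X Y : 𝓜(ℂ, A₀)}
    (hX : ∀ i, X * S i = S i * Y) : Commute W X :=
  hS.ext fun m => by rw [mul_assoc, hX, ← mul_assoc, hW, ← hX, mul_assoc, hW]

theorem sum_range_mul_eq_zero_of_mul_eq (hW : ∀ m, W * S m = S (q m)) {n : ℕ}
    (hn : ∀ m, n ≤ q m) : (∑ i ∈ range n, S i * star (S i)) * W = 0 :=
  hS.ext fun m => by
    rw [mul_assoc, hW, zero_mul]
    exact sum_mul_star_mul_eq_zero hS.2.1 _ _ id fun i hi =>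
      ((mem_range.1 hi).trans_le (hn m)).ne

end Shift

theorem exists_cutting_pair (hS : IsStrictCuttingSequence S) :
    ∃ s₁ s₂ : 𝓜(ℂ, A₀), star s₁ * s₁ = 1 ∧ star s₂ * s₂ = 1 ∧ star s₁ * s₂ = 0 ∧
      s₁ * star s₁ + s₂ * star s₂ = 1 := by
  have hinj₁ : Function.Injective fun m : ℕ => 2 * m := fun m m' h => by simp_all
  have hinj₂ : Function.Injective fun m : ℕ => 2 * m + 1 := fun m m' h => by simp_all
  obtain ⟨s₁, hs₁⟩ := hS.exists_mul_eq hinj₁ fun m => by omega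
  obtain ⟨s₂, hs₂⟩ := hS.exists_mul_eq hinj₂ fun m => by omega
  refine ⟨s₁, s₂, hS.star_mul_self_eq_one_of_mul_eq hinj₁ hs₁,
    hS.star_mul_self_eq_one_of_mul_eq hinj₂ hs₂,
    hS.star_mul_eq_zero_of_disjoint_range hs₂ hs₁ (Set.disjoint_range_iff.2 fun m m' => by omega),
    hS.ext fun k => ?_⟩
  obtain ⟨m, rfl | rfl⟩ := Nat.even_or_odd' k
  · rw [add_mul, mul_assoc, mul_assoc, hS.star_mul_of_mul_eq hinj₁ hs₁ m,
      hS.star_mul_eq_zero_of_mul_eq hs₂ fun m' => by omega, hs₁, mul_zero, add_zero, one_mul]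
  · rw [add_mul, mul_assoc, mul_assoc, hS.star_mul_of_mul_eq hinj₂ hs₂ m,
      hS.star_mul_eq_zero_of_mul_eq hs₁ fun m' => by omega, hs₂, mul_zero, zero_add, one_mul]

theorem tendsto_norm_coe_mul (hS : IsStrictCuttingSequence S) {T : ℕ → 𝓜(ℂ, A₀)}
    (hT : ∀ n, star (T n) * T n = 1) (hPT : ∀ n, (∑ i ∈ range n, S i * star (S i)) * T n = 0)
    (c : A₀) : Tendsto (fun n => ‖(c : 𝓜(ℂ, A₀)) * T n‖) atTop (𝓝 0) := by
  refine squeeze_zero (fun _ => norm_nonneg _) (fun n => ?_) (hS.2.2 c).2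
  calc ‖(c : 𝓜(ℂ, A₀)) * T n‖
      = ‖(c : 𝓜(ℂ, A₀)) * (1 - ∑ i ∈ range n, S i * star (S i)) * T n‖ := by
        rw [mul_assoc, sub_mul, hPT, one_mul, sub_zero]
    _ ≤ _ := (norm_mul_le _ _).trans <|
        mul_le_of_le_one_right (norm_nonneg _) (norm_le_one_of_star_mul_self_eq_one (hT n))

end IsStrictCuttingSequence

theorem stmt0_general {A A₀ : Type*}
    [NonUnitalCStarAlgebra A]
    [NonUnitalCStarAlgebra A₀]
    (ψ φ : A →⋆ₙₐ[ℂ] 𝓜(ℂ, A₀)) (hψ : Absorbing ψ)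
    (S : ℕ → 𝓜(ℂ, A₀)) (hS : IsStrictCuttingSequence S)
    (Φ : A →⋆ₙₐ[ℂ] 𝓜(ℂ, A₀)) (hΦ : ∀ (a : A) (i : ℕ), Φ a * S i = S i * φ a) :
    ∃ v : ℕ → 𝓜(ℂ, A₀),
      (∀ n, star (v n) * v n = 1) ∧
      (∀ i j, i ≠ j → star (v j) * v i = 0) ∧
      ∀ a : A,
        (∀ n, v n * Φ a - ψ a * v n ∈ canonicalIdeal A₀) ∧
        Tendsto (fun n => ‖v n * Φ a - ψ a * v n‖) atTop (nhds 0) := by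
  obtain ⟨s₁, s₂, hs₁, hs₂, hs₁₂, hsum⟩ := hS.exists_cutting_pair
  have hpair (n : ℕ) : Function.Injective (Nat.pair n) := fun _ _ h => (Nat.pair_eq_pair.1 h).2
  choose T hT using fun n => hS.exists_mul_eq (hpair n) (Nat.right_le_pair n)
  have hTiso (n : ℕ) : star (T n) * T n = 1 := hS.star_mul_self_eq_one_of_mul_eq (hpair n) (hT n)
  obtain ⟨u, hu, hψu⟩ := hψ Φ s₁ s₂ hs₁ hs₂ hs₁₂ hsum
  set w := u 0 * s₂
  have hu₀w : star (u 0) * w = s₂ := by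
    rw [← mul_assoc, (Unitary.mem_iff.1 (hu 0)).1, one_mul]
  have hw : star w * w = 1 := by rw [star_mul, mul_assoc, hu₀w, hs₂]
  have hw_star_mul (x y : 𝓜(ℂ, A₀)) : star (w * x) * (w * y) = star x * y := by
    rw [star_mul, mul_assoc, ← mul_assoc (star w), hw, one_mul]
  refine ⟨fun n => w * T n, fun n => ?_, fun i j hij => ?_, fun a => ?_⟩
  · rw [hw_star_mul, hTiso]
  · rw [hw_star_mul]
    exact hS.star_mul_eq_zero_of_disjoint_range (hT i) (hT j)
      (Set.disjoint_range_iff.2 fun m m' h => hij (Nat.pair_eq_pair.1 h).1)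
  · obtain ⟨b, hb⟩ := (hψu a).1 0
    have hwΦ : w * Φ a = (ψ a - b) * w := by
      rw [hb, sub_sub_cancel, mul_assoc _ (star (u 0)), hu₀w]
      simp only [w, mul_assoc, add_mul, hs₁₂, hs₂, mul_zero, zero_add, mul_one]
    have key (n : ℕ) : w * T n * Φ a - ψ a * (w * T n) = ↑(w.snd (-b)) * T n := by
      rw [mul_assoc, (hS.commute_of_mul_eq (hT n) (hΦ a)).eq, ← mul_assoc, hwΦ,
        ← DoubleCentralizer.coe_mul, DoubleCentralizer.coe_neg]
      noncomm_ring
    refine ⟨fun n => ?_, ?_⟩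
    · rw [key, DoubleCentralizer.coe_mul]
      exact ⟨_, rfl⟩
    · simpa only [key] using hS.tendsto_norm_coe_mul hTiso
        (fun n => hS.sum_range_mul_eq_zero_of_mul_eq (hT n) (Nat.left_le_pair n)) (w.snd (-b))

theorem stmt0 {A A₀ : Type*}
    [NonUnitalCStarAlgebra A] [TopologicalSpace.SeparableSpace A]
    [NonUnitalCStarAlgebra A₀] [TopologicalSpace.SeparableSpace A₀]
    (ψ φ : A →⋆ₙₐ[ℂ] 𝓜(ℂ, A₀)) (hψ : Absorbing ψ)
    (S : ℕ → 𝓜(ℂ, A₀)) (hS : IsStrictCuttingSequence S)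
    (Φ : A →⋆ₙₐ[ℂ] 𝓜(ℂ, A₀)) (hΦ : ∀ (a : A) (i : ℕ), Φ a * S i = S i * φ a) :
    ∃ v : ℕ → 𝓜(ℂ, A₀),
      (∀ n, star (v n) * v n = 1) ∧
      (∀ i j, i ≠ j → star (v j) * v i = 0) ∧
      ∀ a : A,
        (∀ n, v n * Φ a - ψ a * v n ∈ canonicalIdeal A₀) ∧
        Tendsto (fun n => ‖v n * Φ a - ψ a * v n‖) atTop (nhds 0) :=
  stmt0_general ψ φ hψ S hS Φ hΦ
end

section
/- Let A be a unital C*-algebra, I a closed two-sided ideal of A, and p, q projections in A with ‖p − q‖ < 1 and p − q ∈ I. Then z = pq + (1−p)(1−q) is an invertible element of A lying in 1 + I, it satisfies pz = zq, and the unitary v = z(z*z)^{−1/2} from the polar decomposition of z lies in 1 + I and satisfies v q v* = p. -/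
/-!
For projections `p, q` one computes `z* z = z z* = 1 - (p - q)²`, and `‖(p - q)²‖ = ‖p - q‖² < 1`,
so the normal element `z` is invertible; moreover `z - 1 = p (q - p) + (p - q) q ∈ I`.
The polar part `v = z w`, `w = (z* z)^{-1/2}`, is unitary for any invertible `z`. Since `q`
commutes with `(p - q)²`, it commutes with `w`, whence `v q = z q w = p z w = p v` and
`v q v* = p`. Finally `w - 1 = (1 - z* z) g(z* z)` with `g t = (√t (1 + √t))⁻¹`, so
`v - 1 = (z - 1) w + (w - 1) ∈ I`.
-/

section Ring

variable {R : Type*} [Ring R] {p q : R}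

def intertwiner (p q : R) : R := p * q + (1 - p) * (1 - q)

theorem IsIdempotentElem.mul_intertwiner (hp : IsIdempotentElem p) (hq : IsIdempotentElem q) :
    p * intertwiner p q = intertwiner p q * q := by
  simp only [intertwiner, mul_add, add_mul, mul_sub, sub_mul, mul_one, one_mul, ← mul_assoc,
    hp.eq, hq.eq, hq.mul_mul_self]
  abel

theorem IsIdempotentElem.intertwiner_mul_intertwiner (hp : IsIdempotentElem p)
    (hq : IsIdempotentElem q) : intertwiner p q * intertwiner q p = 1 - (p - q) * (p - q) := by
  simp only [intertwiner, mul_add, add_mul, mul_sub, sub_mul, mul_one, one_mul, ← mul_assoc,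
    hp.eq, hq.eq, hq.mul_mul_self]
  abel

theorem IsIdempotentElem.commute_sub_mul_self (hp : IsIdempotentElem p)
    (hq : IsIdempotentElem q) : Commute q ((p - q) * (p - q)) := by
  simp only [Commute, SemiconjBy, mul_sub, sub_mul, ← mul_assoc, hp.eq, hq.eq, hq.mul_mul_self]
  abel

theorem IsIdempotentElem.intertwiner_sub_one (hp : IsIdempotentElem p)
    (hq : IsIdempotentElem q) : intertwiner p q - 1 = p * (q - p) + (p - q) * q := by
  simp only [intertwiner, mul_sub, sub_mul, mul_one, one_mul, hp.eq, hq.eq]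
  abel

theorem IsIdempotentElem.intertwiner_sub_one_mem (hp : IsIdempotentElem p)
    (hq : IsIdempotentElem q) (I : TwoSidedIdeal R) (hpq : p - q ∈ I) :
    intertwiner p q - 1 ∈ I := by
  rw [hp.intertwiner_sub_one hq, ← neg_sub]
  exact I.add_mem (I.mul_mem_left _ _ (I.neg_mem hpq)) (I.mul_mem_right _ _ hpq)

variable [StarRing R]

theorem star_intertwiner (hp : IsSelfAdjoint p) (hq : IsSelfAdjoint q) :
    star (intertwiner p q) = intertwiner q p := by
  simp [intertwiner, hp.star_eq, hq.star_eq]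

theorem IsStarProjection.star_intertwiner_mul_self (hp : IsStarProjection p)
    (hq : IsStarProjection q) :
    star (intertwiner p q) * intertwiner p q = 1 - (p - q) * (p - q) := by
  rw [star_intertwiner hp.isSelfAdjoint hq.isSelfAdjoint,
    hq.isIdempotentElem.intertwiner_mul_intertwiner hp.isIdempotentElem, ← neg_sub p q, neg_mul_neg]

theorem IsStarProjection.intertwiner_mul_star_self (hp : IsStarProjection p)
    (hq : IsStarProjection q) :
    intertwiner p q * star (intertwiner p q) = 1 - (p - q) * (p - q) := by
  rw [star_intertwiner hp.isSelfAdjoint hq.isSelfAdjoint,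
    hp.isIdempotentElem.intertwiner_mul_intertwiner hq.isIdempotentElem]

end Ring

theorem IsStarProjection.isUnit_intertwiner {A : Type*} [CStarAlgebra A] {p q : A}
    (hp : IsStarProjection p) (hq : IsStarProjection q) (hpq : ‖p - q‖ < 1) :
    IsUnit (intertwiner p q) := by
  have hd : ‖(p - q) * (p - q)‖ < 1 := by
    rw [(hp.isSelfAdjoint.sub hq.isSelfAdjoint).norm_mul_self]
    exact pow_lt_one₀ (norm_nonneg _) hpq two_ne_zero
  have hnormal : Commute (intertwiner p q) (star (intertwiner p q)) :=
    (hp.intertwiner_mul_star_self hq).trans (hp.star_intertwiner_mul_self hq).symm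
  refine (hnormal.isUnit_mul_iff.mp ?_).1
  rw [hp.intertwiner_mul_star_self hq]
  exact isUnit_one_sub_of_norm_lt_one hd

section InvSqrt

variable {A : Type*} [CStarAlgebra A] [PartialOrder A] [StarOrderedRing A] {a : A}

theorem IsStrictlyPositive.continuousOn_inv_sqrt (ha : IsStrictlyPositive a) :
    ContinuousOn (fun t : ℝ => (√t)⁻¹) (spectrum ℝ a) :=
  Real.continuous_sqrt.continuousOn.inv₀ fun _ ht => (Real.sqrt_pos.2 (ha.spectrum_pos ht)).ne'

theorem IsStrictlyPositive.cfc_inv_sqrt_mul_self_mul (ha : IsStrictlyPositive a) :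
    cfc (fun t : ℝ => (√t)⁻¹) a * cfc (fun t : ℝ => (√t)⁻¹) a * a = 1 := by
  have hf := ha.continuousOn_inv_sqrt
  calc _ = cfc (fun t : ℝ => (√t)⁻¹ * (√t)⁻¹ * t) a := by
          rw [cfc_mul (fun t : ℝ => (√t)⁻¹ * (√t)⁻¹) (fun t => t) a (hf.mul hf),
            cfc_mul _ _ a hf hf, cfc_id' ℝ a]
    _ = cfc (fun _ : ℝ => (1 : ℝ)) a := cfc_congr fun t ht => by
          have ht : 0 < t := ha.spectrum_pos ht
          rw [← mul_inv, Real.mul_self_sqrt ht.le, inv_mul_cancel₀ ht.ne']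
    _ = 1 := cfc_const_one ℝ a

theorem IsStrictlyPositive.cfc_inv_sqrt_sub_one_mem (ha : IsStrictlyPositive a)
    (I : TwoSidedIdeal A) (h : 1 - a ∈ I) : cfc (fun t : ℝ => (√t)⁻¹) a - 1 ∈ I := by
  have hf := ha.continuousOn_inv_sqrt
  have hg : ContinuousOn (fun t : ℝ => (√t * (1 + √t))⁻¹) (spectrum ℝ a) :=
    ContinuousOn.inv₀ (by fun_prop) fun t ht => by
      have := Real.sqrt_pos.2 (ha.spectrum_pos ht)
      positivity
  have hfactor :
      cfc (fun t : ℝ => (√t)⁻¹) a - 1 = (1 - a) * cfc (fun t : ℝ => (√t * (1 + √t))⁻¹) a :=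
    calc _ = cfc (fun t : ℝ => (√t)⁻¹ - 1) a := by rw [cfc_sub _ _ a hf, cfc_const_one ℝ a]
      _ = cfc (fun t : ℝ => (1 - t) * (√t * (1 + √t))⁻¹) a := cfc_congr fun t ht => by
            have hsqrt := Real.sqrt_pos.2 (ha.spectrum_pos ht)
            have hsq := Real.mul_self_sqrt (ha.spectrum_pos ht).le
            field_simp
            linear_combination -hsq
      _ = _ := by
            rw [cfc_mul _ _ a (by fun_prop) hg, cfc_sub _ _ a, cfc_const_one ℝ a, cfc_id' ℝ a]
  rw [hfactor]
  exact I.mul_mem_right _ _ h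

end InvSqrt

theorem IsUnit.mul_cfc_inv_sqrt_star_mul_self_mem_unitary {A : Type*} [CStarAlgebra A] {z : A}
    (hz : IsUnit z) : z * cfc (fun t : ℝ => (√t)⁻¹) (star z * z) ∈ unitary A := by
  let _ := CStarAlgebra.spectralOrder A
  let _ := CStarAlgebra.spectralOrderedRing A
  set a := star z * z
  set w := cfc (fun t : ℝ => (√t)⁻¹) a
  have ha : IsStrictlyPositive a := (hz.star.mul hz).isStrictlyPositive (star_mul_self_nonneg z)
  have hwwa : w * w * a = 1 := ha.cfc_inv_sqrt_mul_self_mul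
  have hwa : Commute w a := (Commute.refl a).cfc_real _
  rw [Unitary.mem_iff, star_mul, IsSelfAdjoint.cfc.star_eq]
  constructor
  · calc w * star z * (z * w) = w * a * w := by simp only [a, mul_assoc]
      _ = 1 := by rw [mul_assoc, ← hwa.eq, ← mul_assoc, hwwa]
  · -- cancel the unit `z*` on the left: `z* (z w² z*) = a w² z* = z*`
    refine hz.star.mul_left_cancel ?_
    calc star z * (z * w * (w * star z)) = a * (w * w) * star z := by simp only [a, mul_assoc]
      _ = star z * 1 := by rw [← (hwa.mul_left hwa).eq, hwwa, one_mul, mul_one]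

theorem stmt8_general {A : Type*} [CStarAlgebra A]
    (I : TwoSidedIdeal A)
    (p q : A)
    (hp : IsSelfAdjoint p ∧ IsIdempotentElem p)
    (hq : IsSelfAdjoint q ∧ IsIdempotentElem q)
    (hnorm : ‖p - q‖ < 1) (hpq : p - q ∈ I) :
    letI z : A := p * q + (1 - p) * (1 - q)
    letI v : A := z * cfc (fun t : ℝ => (Real.sqrt t)⁻¹) (star z * z)
    IsUnit z ∧ z - 1 ∈ I ∧ p * z = z * q ∧
      v ∈ unitary A ∧ v - 1 ∈ I ∧ v * q * star v = p := by
  let _ := CStarAlgebra.spectralOrder A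
  let _ := CStarAlgebra.spectralOrderedRing A
  replace hp : IsStarProjection p := ⟨hp.2, hp.1⟩
  replace hq : IsStarProjection q := ⟨hq.2, hq.1⟩
  set z : A := p * q + (1 - p) * (1 - q)
  set w := cfc (fun t : ℝ => (√t)⁻¹) (star z * z)
  set v := z * w
  have hzz : star z * z = 1 - (p - q) * (p - q) := hp.star_intertwiner_mul_self hq
  have hz : IsUnit z := hp.isUnit_intertwiner hq hnorm
  have hz1 : z - 1 ∈ I := hp.isIdempotentElem.intertwiner_sub_one_mem hq.isIdempotentElem I hpq
  have hpz : p * z = z * q := hp.isIdempotentElem.mul_intertwiner hq.isIdempotentElem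
  have hv : v ∈ unitary A := hz.mul_cfc_inv_sqrt_star_mul_self_mem_unitary
  have hw1 : w - 1 ∈ I := by
    refine ((hz.star.mul hz).isStrictlyPositive (star_mul_self_nonneg z)).cfc_inv_sqrt_sub_one_mem
      I ?_
    rw [hzz, sub_sub_cancel]
    exact I.mul_mem_right _ _ hpq
  have hqa : Commute (star z * z) q := by
    rw [hzz]
    exact (Commute.one_left q).sub_left
      (hp.isIdempotentElem.commute_sub_mul_self hq.isIdempotentElem).symm
  have hwq : Commute w q := hqa.cfc_real _
  have hvq : v * q = p * v := by
    simp only [v, mul_assoc, hwq.eq]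
    rw [← mul_assoc, ← hpz, mul_assoc]
  refine ⟨hz, hz1, hpz, hv, ?_, ?_⟩
  · have hv1 : v - 1 = (z - 1) * w + (w - 1) := by simp only [v, sub_mul, one_mul]; abel
    rw [hv1]
    exact I.add_mem (I.mul_mem_right _ _ hz1) hw1
  · rw [hvq, mul_assoc, Unitary.mul_star_self_of_mem hv, mul_one]

theorem stmt8 {A : Type*} [CStarAlgebra A]
    (I : TwoSidedIdeal A) (hI : IsClosed (I : Set A))
    (p q : A)
    (hp : IsSelfAdjoint p ∧ IsIdempotentElem p)
    (hq : IsSelfAdjoint q ∧ IsIdempotentElem q)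
    (hnorm : ‖p - q‖ < 1) (hpq : p - q ∈ I) :
    letI z : A := p * q + (1 - p) * (1 - q)
    letI v : A := z * cfc (fun t : ℝ => (Real.sqrt t)⁻¹) (star z * z)
    IsUnit z ∧ z - 1 ∈ I ∧ p * z = z * q ∧
      v ∈ unitary A ∧ v - 1 ∈ I ∧ v * q * star v = p :=
  stmt8_general I p q hp hq hnorm hpq
end

section
/- Let A be a unital C*-algebra, X a metric space, and f: X → A a norm-continuous function such that each f(t) is self-adjoint with 0 ≤ f(t) ≤ 1. Fix t_0 ∈ X and suppose z ∈ (0, 1/4) satisfies z ∉ σ(f(t_0) − f(t_0)²). Then there exist δ > 0 and real numbers 0 < a < b < 1 such that σ(f(s)) ⊆ [0, a) ∪ (b, 1] for every s ∈ X with d(s, t_0) < δ. -/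
/-!
Put `g t = f t - f t ^ 2` and let `α ∈ (0, 1/2)` be the root of `α - α ^ 2 = z`. Since the
resolvent set is open jointly in the scalar and the element, `σ (g s)` avoids a whole interval
around `z` for `s` near `t₀`. By the spectral mapping theorem `λ ∈ σ (f s)` forces
`λ - λ ^ 2 ∈ σ (g s)`, so `λ` avoids a closed interval `[a, b]` around `α`.
-/

open Set Filter Topology

section Spectrum

variable {𝕜 A : Type*} [NormedField 𝕜] [NormedRing A] [NormedAlgebra 𝕜 A]
  [HasSummableGeomSeries A]

theorem isOpen_setOf_notMem_spectrum : IsOpen {p : 𝕜 × A | p.1 ∉ spectrum 𝕜 p.2} := by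
  simp only [spectrum.notMem_iff]
  exact Units.isOpen.preimage (by fun_prop)

theorem exists_pos_eventually_forall_dist_lt_notMem_spectrum {X : Type*} [TopologicalSpace X]
    {g : X → A} {t₀ : X} (hg : ContinuousAt g t₀) {z : 𝕜} (hz : z ∉ spectrum 𝕜 (g t₀)) :
    ∃ ε > 0, ∀ᶠ t in 𝓝 t₀, ∀ μ, dist μ z < ε → μ ∉ spectrum 𝕜 (g t) := by
  have hnhds : ∀ᶠ p in 𝓝 z ×ˢ 𝓝 (g t₀), p ∈ {p : 𝕜 × A | p.1 ∉ spectrum 𝕜 p.2} := by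
    rw [← nhds_prod_eq]
    exact isOpen_setOf_notMem_spectrum.mem_nhds hz
  obtain ⟨P, hP, Q, hQ, hPQ⟩ := eventually_prod_iff.mp hnhds
  obtain ⟨ε, hε, hball⟩ := Metric.eventually_nhds_iff.mp hP
  exact ⟨ε, hε, (hg.eventually hQ).mono fun t ht μ hμ => hPQ (hball hμ) ht⟩

end Spectrum

theorem sub_sq_mem_spectrum {𝕜 A : Type*} [Field 𝕜] [Ring A] [Algebra 𝕜 A] {a : A} {μ : 𝕜}
    (hμ : μ ∈ spectrum 𝕜 a) : μ - μ ^ 2 ∈ spectrum 𝕜 (a - a ^ 2) := by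
  have h := spectrum.subset_polynomial_aeval a (Polynomial.X - Polynomial.X ^ 2) ⟨μ, hμ, rfl⟩
  simpa only [Polynomial.eval_sub, Polynomial.eval_pow, Polynomial.eval_X, map_sub, map_pow,
    Polynomial.aeval_X] using h

theorem exists_mem_Ioo_sub_sq_eq {z : ℝ} (hz : z ∈ Ioo 0 (1 / 4)) :
    ∃ α ∈ Ioo (0 : ℝ) 1, α - α ^ 2 = z := by
  have hIVT := intermediate_value_Ioo (by norm_num : (0 : ℝ) ≤ 1 / 2)
    (f := fun x : ℝ => x - x ^ 2) (by fun_prop)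
  obtain ⟨α, ⟨hα0, hα1⟩, hαz⟩ := hIVT (by norm_num; exact hz)
  exact ⟨α, ⟨hα0, by linarith⟩, hαz⟩

theorem stmt10_general {A : Type*} [CStarAlgebra A] {X : Type*} [MetricSpace X]
    (f : X → A) (hf : Continuous f)
    (hspec : ∀ t, spectrum ℝ (f t) ⊆ Set.Icc 0 1)
    (t₀ : X) (z : ℝ) (hz : z ∈ Set.Ioo 0 (1 / 4))
    (hz' : z ∉ spectrum ℝ (f t₀ - f t₀ ^ 2)) :
    ∃ δ > (0 : ℝ), ∃ a b : ℝ, 0 < a ∧ a < b ∧ b < 1 ∧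
      ∀ s : X, dist s t₀ < δ → spectrum ℝ (f s) ⊆ Set.Ico 0 a ∪ Set.Ioc b 1 := by
  obtain ⟨α, hα, hαz⟩ := exists_mem_Ioo_sub_sq_eq hz
  obtain ⟨ε, hε, hev⟩ := exists_pos_eventually_forall_dist_lt_notMem_spectrum
    (hf.sub (hf.pow 2)).continuousAt hz'
  obtain ⟨δ, hδ, hgap⟩ := Metric.eventually_nhds_iff.mp hev
  have hU : {μ : ℝ | dist (μ - μ ^ 2) z < ε} ∩ Ioo 0 1 ∈ 𝓝 α := by
    refine inter_mem ?_ (Ioo_mem_nhds hα.1 hα.2)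
    have hq : ContinuousAt (fun μ : ℝ => μ - μ ^ 2) α := by fun_prop
    exact hq.preimage_mem_nhds (by rw [hαz]; exact Metric.ball_mem_nhds z hε)
  obtain ⟨ρ, hρ, hball⟩ := Metric.mem_nhds_iff.mp hU
  have hIcc : Icc (α - ρ / 2) (α + ρ / 2) ⊆ {μ : ℝ | dist (μ - μ ^ 2) z < ε} ∩ Ioo 0 1 := by
    rw [← Real.closedBall_eq_Icc]
    exact (Metric.closedBall_subset_ball (half_lt_self hρ)).trans hball
  refine ⟨δ, hδ, α - ρ / 2, α + ρ / 2, (hIcc ⟨le_rfl, by linarith⟩).2.1, by linarith,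
    (hIcc ⟨by linarith, le_rfl⟩).2.2, fun s hs μ hμ => ?_⟩
  have hout : μ ∉ Icc (α - ρ / 2) (α + ρ / 2) := fun hmem =>
    hgap hs _ (hIcc hmem).1 (sub_sq_mem_spectrum hμ)
  rcases lt_or_ge μ (α - ρ / 2) with hlt | hge
  · exact Or.inl ⟨(hspec s hμ).1, hlt⟩
  · exact Or.inr ⟨not_le.mp fun hle => hout ⟨hge, hle⟩, (hspec s hμ).2⟩

theorem stmt10 {A : Type*} [CStarAlgebra A] {X : Type*} [MetricSpace X]
    (f : X → A) (hf : Continuous f)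
    (hsa : ∀ t, IsSelfAdjoint (f t)) (hspec : ∀ t, spectrum ℝ (f t) ⊆ Set.Icc 0 1)
    (t₀ : X) (z : ℝ) (hz : z ∈ Set.Ioo 0 (1 / 4))
    (hz' : z ∉ spectrum ℝ (f t₀ - f t₀ ^ 2)) :
    ∃ δ > (0 : ℝ), ∃ a b : ℝ, 0 < a ∧ a < b ∧ b < 1 ∧
      ∀ s : X, dist s t₀ < δ → spectrum ℝ (f s) ⊆ Set.Ico 0 a ∪ Set.Ioc b 1 :=
  stmt10_general f hf hspec t₀ z hz hz'
end
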